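/- Let A be an n×n complex matrix and s a positive real number. If rank(A) ≥ n-1 (n ≥ 2) and det(A) is not a negative imaginary number (not of the form i·r with r < 0 real), then A + s·i·conj(adj(A))^T is invertible. -/

import Mathlib

/-
If `B = A + s i (adj A)ᴴ` kills `x ≠ 0`, put `c = (adj A)ᴴ x`. Pairing `A x = -s i c` with `c` and
using `adj A * A = det A • 1` gives `det A ‖x‖² + s i ‖c‖² = 0`. If `c ≠ 0` this makes `det A` a
negative multiple of `i`. If `c = 0`, then `A x = 0`, so `rank A = n - 1`, `ker A = ℂ x`, and the
nonzero columns of `adj A` lie in `ker A`; hence `xᴴ adj A ≠ 0`, contradicting `c = 0`.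
-/

open Matrix
open scoped ComplexOrder

namespace Matrix

variable {K n : Type*} [Field K] [Fintype n]

theorem ker_mulVecLin_eq_span_singleton {A : Matrix n n K} (hr : Fintype.card n ≤ A.rank + 1)
    {x : n → K} (hx : A *ᵥ x = 0) (hx0 : x ≠ 0) :
    LinearMap.ker A.mulVecLin = Submodule.span K {x} := by
  have hle : Submodule.span K {x} ≤ LinearMap.ker A.mulVecLin :=
    (Submodule.span_singleton_le_iff_mem _ _).2 hx
  refine (Submodule.eq_of_le_of_finrank_le hle ?_).symm
  have hrank_nullity := LinearMap.finrank_range_add_finrank_ker A.mulVecLin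
  rw [Module.finrank_fintype_fun_eq_card] at hrank_nullity
  rw [finrank_span_singleton hx0]
  change A.rank + _ = _ at hrank_nullity
  omega

variable [DecidableEq n]

theorem updateCol_mulVec (A : Matrix n n K) (i : n) (b w : n → K) :
    A.updateCol i b *ᵥ w = A *ᵥ Function.update w i 0 + w i • b := by
  have hw : w = Function.update w i 0 + Pi.single i (w i) := by
    ext k; by_cases hk : k = i <;> simp [hk]
  conv_lhs => rw [hw]
  rw [mulVec_add, mulVec_single]
  congr 1
  · ext k
    simp only [mulVec, dotProduct]
    refine Finset.sum_congr rfl fun j _ => ?_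
    by_cases hj : j = i <;> simp [hj]
  · ext k; simp [mul_comm]

theorem adjugate_ne_zero_of_card_le_rank_add_one {A : Matrix n n K}
    (hr : Fintype.card n ≤ A.rank + 1) {x : n → K} (hx : A *ᵥ x = 0) (hx0 : x ≠ 0) :
    A.adjugate ≠ 0 := by
  -- Replacing a column `i` with `x i ≠ 0` by some `b ∉ range A` yields an invertible matrix, yet
  -- by Cramer its determinant is the `i`-th entry of `adj A *ᵥ b`.
  obtain ⟨b, hb⟩ : ∃ b, b ∉ LinearMap.range A.mulVecLin := by
    by_contra! h
    refine hx0 (LinearMap.injective_iff_surjective.2 (fun b => h b) ?_)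
    simpa using hx
  obtain ⟨i, hi⟩ : ∃ i, x i ≠ 0 := Function.ne_iff.1 hx0
  intro hadj
  have hdet : (A.updateCol i b).det = 0 := by
    rw [← cramer_apply, cramer_eq_adjugate_mulVec, hadj, zero_mulVec, Pi.zero_apply]
  obtain ⟨w, hw0, hw⟩ := exists_mulVec_eq_zero_iff.2 hdet
  rw [updateCol_mulVec] at hw
  have hwi : w i = 0 := by
    by_contra hwi
    refine hb ⟨-(w i)⁻¹ • Function.update w i 0, ?_⟩
    rw [mulVecLin_apply, mulVec_smul, eq_neg_of_add_eq_zero_left hw, smul_neg, neg_smul, neg_neg,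
      inv_smul_smul₀ hwi]
  rw [hwi, zero_smul, add_zero] at hw
  obtain ⟨t, ht⟩ := Submodule.mem_span_singleton.1 <|
    (ker_mulVecLin_eq_span_singleton hr hx hx0) ▸ (LinearMap.mem_ker.2 hw)
  have ht0 : t = 0 := by
    simpa [hi] using congrFun ht i
  refine hw0 ?_
  rw [← Function.update_eq_self i w, hwi, ← ht, ht0, zero_smul]

theorem star_adjugate_conjTranspose_mulVec_dotProduct_mulVec {R : Type*} [CommRing R]
    [StarRing R] (A : Matrix n n R) (x : n → R) :
    star (A.adjugateᴴ *ᵥ x) ⬝ᵥ (A *ᵥ x) = A.det * (star x ⬝ᵥ x) := by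
  rw [star_mulVec, conjTranspose_conjTranspose, ← dotProduct_mulVec, mulVec_mulVec,
    adjugate_mul, smul_mulVec, one_mulVec, dotProduct_smul, smul_eq_mul]

theorem conjTranspose_adjugate_mulVec_ne_zero {𝕜 : Type*} [RCLike 𝕜] {A : Matrix n n 𝕜}
    (hr : Fintype.card n ≤ A.rank + 1) {x : n → 𝕜} (hx : A *ᵥ x = 0) (hx0 : x ≠ 0) :
    A.adjugateᴴ *ᵥ x ≠ 0 := by
  intro hc
  obtain ⟨b, hb⟩ : ∃ b, A.adjugate *ᵥ b ≠ 0 := by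
    by_contra! h
    exact adjugate_ne_zero_of_card_le_rank_add_one hr hx hx0
      (ext_of_mulVec_single fun j => by rw [h, zero_mulVec])
  have hdet : A.det = 0 := exists_mulVec_eq_zero_iff.1 ⟨x, hx0, hx⟩
  have hker : A.adjugate *ᵥ b ∈ LinearMap.ker A.mulVecLin := by
    rw [LinearMap.mem_ker, mulVecLin_apply, mulVec_mulVec, mul_adjugate, hdet, zero_smul,
      zero_mulVec]
  obtain ⟨t, ht⟩ := Submodule.mem_span_singleton.1 <|
    (ker_mulVecLin_eq_span_singleton hr hx hx0) ▸ hker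
  have hdot : star x ⬝ᵥ (A.adjugate *ᵥ b) = 0 := by
    rw [dotProduct_mulVec, ← conjTranspose_conjTranspose A.adjugate, ← star_mulVec, hc, star_zero,
      zero_dotProduct]
  rw [← ht, dotProduct_smul, smul_eq_mul] at hdot
  rcases mul_eq_zero.1 hdot with rfl | hxx
  · exact hb (by rw [← ht, zero_smul])
  · exact hx0 (dotProduct_star_self_eq_zero.1 hxx)

end Matrix

theorem exists_neg_eq_I_mul_of_mul_add_I_mul_eq_zero {a p q : ℂ} {s : ℝ} (hs : 0 < s)
    (hp : 0 < p) (hq : 0 < q) (h : a * p + (s * Complex.I) * q = 0) :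
    ∃ r : ℝ, r < 0 ∧ a = Complex.I * r := by
  obtain ⟨P, hP, rfl⟩ := RCLike.pos_iff_exists_ofReal.1 hp
  obtain ⟨Q, hQ, rfl⟩ := RCLike.pos_iff_exists_ofReal.1 hq
  refine ⟨-(s * Q / P), by have := div_pos (mul_pos hs hQ) hP; linarith, ?_⟩
  have hP0 : (P : ℂ) ≠ 0 := by exact_mod_cast hP.ne'
  push_cast
  field_simp
  linear_combination h

theorem psi_s_isUnit_general {n : ℕ} (A : Matrix (Fin n) (Fin n) ℂ) (s : ℝ) (hs : 0 < s)
    (hrank : n - 1 ≤ A.rank)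
    (hdet : ¬ ∃ r : ℝ, r < 0 ∧ A.det = Complex.I * r) :
    IsUnit (A + ((s : ℂ) * Complex.I) • (A.adjugate)ᴴ) := by
  rw [isUnit_iff_isUnit_det, isUnit_iff_ne_zero]
  intro hB
  obtain ⟨x, hx0, hBx⟩ := exists_mulVec_eq_zero_iff.2 hB
  set c := A.adjugateᴴ *ᵥ x
  have hAx : A *ᵥ x + ((s : ℂ) * Complex.I) • c = 0 := by
    rwa [add_mulVec, smul_mulVec] at hBx
  by_cases hc : c = 0
  · rw [hc, smul_zero, add_zero] at hAx
    exact conjTranspose_adjugate_mulVec_ne_zero (by rw [Fintype.card_fin]; omega) hAx hx0 hc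
  · have key : A.det * (star x ⬝ᵥ x) + ((s : ℂ) * Complex.I) * (star c ⬝ᵥ c) = 0 := by
      rw [← star_adjugate_conjTranspose_mulVec_dotProduct_mulVec, ← smul_eq_mul,
        ← dotProduct_smul, ← dotProduct_add, hAx, dotProduct_zero]
    exact hdet (exists_neg_eq_I_mul_of_mul_add_I_mul_eq_zero hs
      (dotProduct_star_self_pos_iff.2 hx0) (dotProduct_star_self_pos_iff.2 hc) key)

theorem psi_s_isUnit {n : ℕ} (hn : 2 ≤ n) (A : Matrix (Fin n) (Fin n) ℂ) (s : ℝ) (hs : 0 < s)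
    (hrank : n - 1 ≤ A.rank)
    (hdet : ¬ ∃ r : ℝ, r < 0 ∧ A.det = Complex.I * r) :
    IsUnit (A + ((s : ℂ) * Complex.I) • (A.adjugate)ᴴ) :=
  psi_s_isUnit_general A s hs hrank hdet
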